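/- arXiv:0909.0799 — 2 statements merged into one kernel-verified Lean document; each statement's English description precedes it below -/
import Mathlib

section
/- Let D be a Dedekind domain and H a congruence subgroup of SL₂(D) with level l(H) = 𝔮. Let 𝔮_∞ = c(H, I₂) and let 𝔮₀ = c(H, g₀), where g₀ ∈ SL₂(D) is any element whose (1,1)-entry is 0 (i.e. g₀(∞) = 0 under the fractional linear action). Then 𝔮₀·𝔮_∞ ⊆ 𝔮. -/
/-!
It suffices to show `g * T(x y) * g⁻¹ ∈ H` for all `g`, `x ∈ q₀`, `y ∈ q∞`. The subgroup `H`
contains `T(q∞)` and, conjugating by `g₀`, the lower unipotents `L(q₀)`. Modulo an ideal `q'`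
with `SL₂(D, q') ≤ H`, if `1 - a c x y` is a unit (`(a, c)` the first column of `g`), an
explicit factorization writes `g * T(x y) * g⁻¹` as `L(·) T(y) L(·) T(·)` with the `L`-parameters
in `q₀` and the `T`-parameters in `q∞`. The unit condition is arranged by replacing `g` with
`L(x') g`, `x' ∈ q₀`, where `x'` is found by the Chinese remainder theorem at the finitely many
primes dividing `q'`.
-/

open Matrix

/-- The translation matrix `T(r) = [[1, r], [0, 1]]` in `SL₂(R)`. -/
def Tm (R : Type*) [CommRing R] (r : R) : Matrix.SpecialLinearGroup (Fin 2) R :=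
  ⟨!![1, r; 0, 1], by simp [Matrix.det_fin_two_of]⟩

/-- The principal congruence subgroup `SL₂(R, 𝔮)`, the kernel of reduction mod `𝔮`. -/
def SLmod (R : Type*) [CommRing R] (q : Ideal R) :
    Subgroup (Matrix.SpecialLinearGroup (Fin 2) R) :=
  (Matrix.SpecialLinearGroup.map (Ideal.Quotient.mk q)).ker

/-- `H` is a congruence subgroup: it contains a principal congruence subgroup of
nonzero level. -/
def IsCongruence {R : Type*} [CommRing R]
    (H : Subgroup (Matrix.SpecialLinearGroup (Fin 2) R)) : Prop :=
  ∃ q : Ideal R, q ≠ ⊥ ∧ SLmod R q ≤ H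

/-- `q` is the level `l(H)` of `H`: the largest ideal all of whose associated translations
lie in the normal core of `H` (equivalently, the largest ideal contained in the
quasi-level of `H`). -/
def IsLevel {R : Type*} [CommRing R]
    (H : Subgroup (Matrix.SpecialLinearGroup (Fin 2) R)) (q : Ideal R) : Prop :=
  (∀ r ∈ q, Tm R r ∈ H.normalCore) ∧
    ∀ I : Ideal R, (∀ r ∈ I, Tm R r ∈ H.normalCore) → I ≤ q

/-- `c` is the cusp amplitude `c(H,g)` of `H` at `g`: the largest ideal contained in the
quasi-amplitude `b(H,g) = {x | g · T(x) · g⁻¹ ∈ H}`. -/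
def IsCuspAmplitude {R : Type*} [CommRing R]
    (H : Subgroup (Matrix.SpecialLinearGroup (Fin 2) R))
    (g : Matrix.SpecialLinearGroup (Fin 2) R) (c : Ideal R) : Prop :=
  (∀ x ∈ c, g * Tm R x * g⁻¹ ∈ H) ∧
    ∀ I : Ideal R, (∀ x ∈ I, g * Tm R x * g⁻¹ ∈ H) → I ≤ c

open scoped MatrixGroups

def Lm (R : Type*) [CommRing R] (r : R) : SL(2, R) :=
  ⟨!![1, 0; r, 1], by simp [det_fin_two_of]⟩

section Elementary

variable {R : Type*} [CommRing R]

@[simp]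
theorem coe_Tm (r : R) : (Tm R r : Matrix (Fin 2) (Fin 2) R) = !![1, r; 0, 1] := rfl

@[simp]
theorem coe_Lm (r : R) : (Lm R r : Matrix (Fin 2) (Fin 2) R) = !![1, 0; r, 1] := rfl

theorem Tm_add (r s : R) : Tm R (r + s) = Tm R r * Tm R s := by
  ext i j
  fin_cases i <;> fin_cases j <;> simp [Matrix.SpecialLinearGroup.coe_mul, add_comm]

theorem map_Tm {S : Type*} [CommRing S] (f : R →+* S) (r : R) :
    Matrix.SpecialLinearGroup.map f (Tm R r) = Tm S (f r) := by
  ext i j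
  fin_cases i <;> fin_cases j <;> simp

theorem map_Lm {S : Type*} [CommRing S] (f : R →+* S) (r : R) :
    Matrix.SpecialLinearGroup.map f (Lm R r) = Lm S (f r) := by
  ext i j
  fin_cases i <;> fin_cases j <;> simp

theorem Lm_mul_apply_zero_zero (r : R) (g : SL(2, R)) : (Lm R r * g) 0 0 = g 0 0 := by
  simp [Matrix.SpecialLinearGroup.coe_mul, Matrix.mul_apply, Fin.sum_univ_two]

theorem Lm_mul_apply_one_zero (r : R) (g : SL(2, R)) :
    (Lm R r * g) 1 0 = r * g 0 0 + g 1 0 := by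
  simp [Matrix.SpecialLinearGroup.coe_mul, Matrix.mul_apply, Fin.sum_univ_two]

theorem coe_conj_Tm (g : SL(2, R)) (z : R) :
    ((g * Tm R z * g⁻¹ : SL(2, R)) : Matrix (Fin 2) (Fin 2) R) =
      !![1 - g 0 0 * g 1 0 * z, g 0 0 ^ 2 * z; -(g 1 0 ^ 2 * z), 1 + g 0 0 * g 1 0 * z] := by
  have hdet : g 0 0 * g 1 1 - g 0 1 * g 1 0 = 1 := by
    rw [← det_fin_two]; exact g.2
  ext i j
  fin_cases i <;> fin_cases j <;>
    simp [Matrix.SpecialLinearGroup.coe_mul, Matrix.SpecialLinearGroup.coe_inv, adjugate_fin_two,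
      Matrix.mul_apply, Fin.sum_univ_two]
  · linear_combination hdet
  · ring
  · ring
  · linear_combination hdet

theorem conj_Tm_eq_Lm_of_apply_zero_zero {g : SL(2, R)} (hg : g 0 0 = 0) (t : R) :
    g * Tm R (-(g 0 1 ^ 2 * t)) * g⁻¹ = Lm R t := by
  have hdet : g 0 1 * g 1 0 = -1 := by
    have := g.2
    rw [det_fin_two, hg] at this
    linear_combination -this
  ext i j
  rw [coe_conj_Tm]
  fin_cases i <;> fin_cases j <;> simp [hg]
  linear_combination t * (g 0 1 * g 1 0 - 1) * hdet

/-- With `a = g 0 0`, `c = g 1 0` and `u = 1 - a c x y`: the LDU decomposition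
`L(-c² x y w) * diag(u, w) * T(a² x y w)` of the left side, where
`diag(u, w) = L(a c x w) * T(y) * L(-(a c x)) * T(-y w)` since `u = 1 + y * (-(a c x))`;
merging adjacent factors leaves four. -/
theorem conj_Tm_mul_eq_of_mul_eq_one (g : SL(2, R)) {x y w : R}
    (hw : (1 - g 0 0 * g 1 0 * (x * y)) * w = 1) :
    g * Tm R (x * y) * g⁻¹ = Lm R (g 1 0 * x * w * (g 0 0 - g 1 0 * y)) * Tm R y *
      Lm R (-(g 0 0 * g 1 0 * x)) * Tm R (y * w * (g 0 0 ^ 2 * x - 1)) := by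
  ext i j
  rw [coe_conj_Tm]
  fin_cases i <;> fin_cases j <;>
    simp [Matrix.SpecialLinearGroup.coe_mul, Matrix.mul_apply, Fin.sum_univ_two]
  · ring
  · linear_combination (y - g 0 0 ^ 2 * x * y) * hw
  · linear_combination (g 1 0 ^ 2 * x * y - g 0 0 * g 1 0 * x) * hw
  · linear_combination (g 0 0 * g 1 0 * x * y * (w - 1) - g 1 0 ^ 2 * x * y ^ 2 * w
      + g 0 0 ^ 2 * g 1 0 ^ 2 * x ^ 2 * y ^ 2 * w - g 0 0 ^ 3 * g 1 0 * x ^ 2 * y * w) * hw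

variable {K : Subgroup SL(2, R)} {I J : Ideal R}

theorem conj_Tm_mul_mem_of_isUnit (hL : ∀ t ∈ I, Lm R t ∈ K) (hT : ∀ t ∈ J, Tm R t ∈ K)
    (g : SL(2, R)) {x y : R} (hx : x ∈ I) (hy : y ∈ J)
    (hu : IsUnit (1 - g 0 0 * g 1 0 * (x * y))) : g * Tm R (x * y) * g⁻¹ ∈ K := by
  obtain ⟨w, hw⟩ := hu.exists_right_inv
  rw [conj_Tm_mul_eq_of_mul_eq_one g hw]
  refine K.mul_mem (K.mul_mem (K.mul_mem (hL _ ?_) (hT _ hy)) (hL _ ?_)) (hT _ ?_)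
  · exact I.mul_mem_right _ (I.mul_mem_right _ (I.mul_mem_left _ hx))
  · exact I.neg_mem (I.mul_mem_left _ hx)
  · exact J.mul_mem_right _ (J.mul_mem_right _ hy)

theorem conj_Tm_mul_mem (hL : ∀ t ∈ I, Lm R t ∈ K) (hT : ∀ t ∈ J, Tm R t ∈ K)
    (g : SL(2, R)) {x y x' : R} (hx : x ∈ I) (hy : y ∈ J) (hx' : x' ∈ I)
    (hu : IsUnit (1 - g 0 0 * (x' * g 0 0 + g 1 0) * (x * y))) :
    g * Tm R (x * y) * g⁻¹ ∈ K := by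
  have hshift : Lm R x' * g * Tm R (x * y) * (Lm R x' * g)⁻¹ ∈ K :=
    conj_Tm_mul_mem_of_isUnit hL hT _ hx hy
      (by rwa [Lm_mul_apply_zero_zero, Lm_mul_apply_one_zero])
  have hconj : g * Tm R (x * y) * g⁻¹ =
      (Lm R x')⁻¹ * (Lm R x' * g * Tm R (x * y) * (Lm R x' * g)⁻¹) * Lm R x' := by
    group
  rw [hconj]
  exact K.mul_mem (K.mul_mem (K.inv_mem (hL x' hx')) hshift) (hL x' hx')

end Elementary

theorem Ideal.sup_iInf_eq_top_of_not_le {R ι : Type*} [CommRing R] {s : Finset ι}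
    {v : ι → Ideal R} (hv : ∀ i ∈ s, (v i).IsMaximal) {J : Ideal R}
    (hJ : ∀ i ∈ s, ¬ J ≤ v i) : J ⊔ ⨅ i ∈ s, v i = ⊤ :=
  Ideal.sup_iInf_eq_top fun i hi => (hv i hi).out.2 _ (right_lt_sup.mpr (hJ i hi))

theorem Ideal.Quotient.isUnit_mk_of_forall_isMaximal {R : Type*} [CommRing R] {I : Ideal R}
    {r : R} (h : ∀ M : Ideal R, M.IsMaximal → I ≤ M → r ∉ M) :
    IsUnit (Ideal.Quotient.mk I r) := by
  by_contra hr
  obtain ⟨M, hM, hrM⟩ := exists_max_ideal_of_mem_nonunits hr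
  refine h (M.comap (Ideal.Quotient.mk I))
    (Ideal.comap_isMaximal_of_surjective _ Ideal.Quotient.mk_surjective) (fun y hy => ?_) hrM
  simp [Ideal.Quotient.eq_zero_iff_mem.mpr hy]

open IsDedekindDomain in
/-- `x` is chosen so that `x * a + c` lies in every prime above `q'` not containing `a * z`. -/
theorem exists_isUnit_mk_one_sub {D : Type*} [CommRing D] [IsDedekindDomain D] {q' : Ideal D}
    (hq' : q' ≠ ⊥) (I : Ideal D) (a c : D) {z : D} (hz : z ∈ I) :
    ∃ x ∈ I, IsUnit (Ideal.Quotient.mk q' (1 - a * (x * a + c) * z)) := by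
  have hfin : {v : HeightOneSpectrum D | v.asIdeal ∣ q' ∧ a * z ∉ v.asIdeal}.Finite :=
    (Ideal.finite_factors hq').subset fun v hv => hv.1
  have hcop : Ideal.span {a} * I ⊔ ⨅ v ∈ hfin.toFinset, v.asIdeal = ⊤ :=
    Ideal.sup_iInf_eq_top_of_not_le (fun v _ => v.isMaximal) fun v hv hle =>
      (hfin.mem_toFinset.mp hv).2 (hle (Ideal.mul_mem_mul (Ideal.mem_span_singleton_self a) hz))
  obtain ⟨_, hj, p, hp, hjp⟩ := Submodule.mem_sup.mp (hcop ▸ Submodule.mem_top : c ∈ _)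
  obtain ⟨x, hx, rfl⟩ := Ideal.mem_span_singleton_mul.mp hj
  refine ⟨-x, I.neg_mem hx, Ideal.Quotient.isUnit_mk_of_forall_isMaximal fun M hM hq'M hM1 => ?_⟩
  have hcM : a * (-x * a + c) * z ∈ M := by
    by_cases haz : a * z ∈ M
    · rw [mul_right_comm]
      exact M.mul_mem_right _ haz
    · let v : HeightOneSpectrum D := ⟨M, hM.isPrime, fun h => hq' (le_bot_iff.mp (h ▸ hq'M))⟩
      have hv : v ∈ hfin.toFinset := hfin.mem_toFinset.mpr ⟨Ideal.dvd_iff_le.mpr hq'M, haz⟩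
      have hpM : p ∈ M := (Submodule.mem_iInf _).mp ((Submodule.mem_iInf _).mp hp v) hv
      rw [show -x * a + c = p by linear_combination -hjp]
      exact M.mul_mem_right _ (M.mul_mem_left _ hpM)
  exact hM.ne_top ((Ideal.eq_top_iff_one M).mpr (by simpa using M.add_mem hM1 hcM))

theorem conj_Tm_mul_mem_of_isCongruence {D : Type*} [CommRing D] [IsDedekindDomain D]
    {H : Subgroup SL(2, D)} (hH : IsCongruence H) {I J : Ideal D}
    (hL : ∀ t ∈ I, Lm D t ∈ H) (hT : ∀ t ∈ J, Tm D t ∈ H) (g : SL(2, D)) {x y : D}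
    (hx : x ∈ I) (hy : y ∈ J) : g * Tm D (x * y) * g⁻¹ ∈ H := by
  obtain ⟨q', hq', hq'H⟩ := hH
  obtain ⟨x', hx', hu⟩ := exists_isUnit_mk_one_sub hq' I (g 0 0) (g 1 0) (I.mul_mem_right y hx)
  let π : SL(2, D) →* SL(2, D ⧸ q') := Matrix.SpecialLinearGroup.map (Ideal.Quotient.mk q')
  rw [← Subgroup.comap_map_eq_self (f := π) hq'H, Subgroup.mem_comap, map_mul, map_mul, map_inv,
    map_Tm, map_mul]
  refine conj_Tm_mul_mem (I := I.map (Ideal.Quotient.mk q')) (J := J.map (Ideal.Quotient.mk q'))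
    ?_ ?_ (π g) (Ideal.mem_map_of_mem _ hx) (Ideal.mem_map_of_mem _ hy)
    (Ideal.mem_map_of_mem _ hx') (by simpa [π] using hu)
  · rintro _ hmem
    obtain ⟨t, ht, rfl⟩ := (Ideal.mem_map_iff_of_surjective _ Ideal.Quotient.mk_surjective).mp hmem
    exact ⟨Lm D t, hL t ht, map_Lm _ t⟩
  · rintro _ hmem
    obtain ⟨t, ht, rfl⟩ := (Ideal.mem_map_iff_of_surjective _ Ideal.Quotient.mk_surjective).mp hmem
    exact ⟨Tm D t, hT t ht, map_Tm _ t⟩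

theorem statement7_general {D : Type*} [CommRing D] [IsDedekindDomain D]
    (H : Subgroup (Matrix.SpecialLinearGroup (Fin 2) D)) (hH : IsCongruence H)
    (q : Ideal D) (hq : IsLevel H q)
    (qinf : Ideal D) (hinf : IsCuspAmplitude H 1 qinf)
    (g₀ : Matrix.SpecialLinearGroup (Fin 2) D) (hg₀ : (g₀ : Matrix (Fin 2) (Fin 2) D) 0 0 = 0)
    (q₀ : Ideal D) (h₀ : IsCuspAmplitude H g₀ q₀) :
    q₀ * qinf ≤ q := by
  have hT : ∀ t ∈ qinf, Tm D t ∈ H := fun t ht => by simpa using hinf.1 t ht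
  have hL : ∀ t ∈ q₀, Lm D t ∈ H := fun t ht => by
    rw [← conj_Tm_eq_Lm_of_apply_zero_zero hg₀ t]
    exact h₀.1 _ (q₀.neg_mem (q₀.mul_mem_left _ ht))
  refine hq.2 _ fun r hr g => ?_
  refine Submodule.mul_induction_on hr (fun x hx y hy => ?_) fun r s hr hs => ?_
  · exact conj_Tm_mul_mem_of_isCongruence hH hL hT g hx hy
  · rw [Tm_add, show g * (Tm D r * Tm D s) * g⁻¹ = g * Tm D r * g⁻¹ * (g * Tm D s * g⁻¹) by group]
    exact H.mul_mem hr hs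

/-- Lemma 2.9. Let `H` be a congruence subgroup of `SL₂(D)` of level `q`,
let `q∞ = c(H, I₂)` and `q₀ = c(H, g₀)` where the `(1,1)`-entry of `g₀` is `0`
(so that `g₀(∞) = 0`). Then `q₀ · q∞ ⊆ q`. -/
theorem statement7 {D : Type*} [CommRing D] [IsDomain D] [IsDedekindDomain D]
    (H : Subgroup (Matrix.SpecialLinearGroup (Fin 2) D)) (hH : IsCongruence H)
    (q : Ideal D) (hq : IsLevel H q)
    (qinf : Ideal D) (hinf : IsCuspAmplitude H 1 qinf)
    (g₀ : Matrix.SpecialLinearGroup (Fin 2) D) (hg₀ : (g₀ : Matrix (Fin 2) (Fin 2) D) 0 0 = 0)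
    (q₀ : Ideal D) (h₀ : IsCuspAmplitude H g₀ q₀) :
    q₀ * qinf ≤ q :=
  statement7_general H hH q hq qinf hinf g₀ hg₀ q₀ h₀
end

section
/- Let D be a Dedekind domain, G = SL₂(D), B the subgroup of upper triangular matrices in G, and U = {T(r) : r ∈ D}. Let H be a subgroup of finite index n in G, and let g₁, …, g_t ∈ G be a complete set of representatives for the double cosets H\G/B (i.e. the double cosets H·gᵢ·B are pairwise disjoint and their union is G). For g ∈ G let b(H,g) = {b ∈ D : g·T(b)·g⁻¹ ∈ H}, regarded as an additive subgroup of D, and let m(H,g) denote the index in B of the subgroup U·(g⁻¹Hg ∩ B) of B generated by U and g⁻¹Hg ∩ B. Then n = Σ_{i=1}^{t} m(H,gᵢ)·[D : b(H,gᵢ)], where [D : b(H,gᵢ)] is the index of the additive subgroup b(H,gᵢ) in D. -/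
/-!
The Borel subgroup `B` acts on the left cosets `G ⧸ H`. The orbit of `g⁻¹H` consists of the cosets
`xH` with `x⁻¹ ∈ HgB`, and its stabilizer is `g⁻¹Hg ∩ B`, so the double coset decomposition gives
`[G : H] = ∑ᵢ [B : Kᵢ]` with `Kᵢ = gᵢ⁻¹Hgᵢ ∩ B`. Since `B` normalizes `U`, the cosets of `Kᵢ` in
`U Kᵢ` are the `U`-orbit of `Kᵢ`, whence `[U Kᵢ : Kᵢ] = [U : U ∩ Kᵢ]`, and `r ↦ T(r)` identifies
`U ∩ Kᵢ ⊆ U` with `b(H, gᵢ) ⊆ D`. The tower `Kᵢ ≤ U Kᵢ ≤ B` then splits `[B : Kᵢ]` as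
`m(H, gᵢ) · [D : b(H, gᵢ)]`.
-/

open Matrix

theorem Tm_zero (R : Type*) [CommRing R] : Tm R 0 = 1 := by
  apply Subtype.ext
  ext i j
  fin_cases i <;> fin_cases j <;> simp [Tm, Matrix.one_fin_two]

theorem Tm_mul {R : Type*} [CommRing R] (a b : R) : Tm R a * Tm R b = Tm R (a + b) := by
  apply Subtype.ext
  rw [Matrix.SpecialLinearGroup.coe_mul]
  ext i j
  fin_cases i <;> fin_cases j <;>
    simp [Tm, Matrix.SpecialLinearGroup.coe_mul, Matrix.mul_apply, Fin.sum_univ_two] <;> ring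

theorem Tm_inv {R : Type*} [CommRing R] (a : R) : (Tm R a)⁻¹ = Tm R (-a) :=
  inv_eq_of_mul_eq_one_right (by rw [Tm_mul, add_neg_cancel, Tm_zero])

/-- The BorelSub subgroup `B` of upper triangular matrices in `SL₂(R)`. -/
def BorelSub (R : Type*) [CommRing R] : Subgroup (Matrix.SpecialLinearGroup (Fin 2) R) where
  carrier := {g | (g : Matrix (Fin 2) (Fin 2) R) 1 0 = 0}
  one_mem' := by
    show ((1 : Matrix.SpecialLinearGroup (Fin 2) R) : Matrix (Fin 2) (Fin 2) R) 1 0 = 0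
    simp
  mul_mem' := by
    intro a b ha hb
    simp only [Set.mem_setOf_eq] at ha hb ⊢
    rw [Matrix.SpecialLinearGroup.coe_mul, Matrix.mul_apply]
    simp [Fin.sum_univ_two, ha, hb]
  inv_mem' := by
    intro a ha
    simp only [Set.mem_setOf_eq] at ha ⊢
    rw [Matrix.SpecialLinearGroup.SL2_inv_expl a]
    simp [ha]

/-- The subgroup `U = {T(r) : r ∈ R}` of translations in `SL₂(R)`. -/
def Ugrp (R : Type*) [CommRing R] : Subgroup (Matrix.SpecialLinearGroup (Fin 2) R) where
  carrier := {g | ∃ r : R, g = Tm R r}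
  one_mem' := ⟨0, (Tm_zero R).symm⟩
  mul_mem' := by
    rintro a b ⟨r, rfl⟩ ⟨s, rfl⟩
    exact ⟨r + s, Tm_mul r s⟩
  inv_mem' := by
    rintro a ⟨r, rfl⟩
    exact ⟨-r, Tm_inv r⟩

/-- The quasi-amplitude `b(H,g) = {x : g · T(x) · g⁻¹ ∈ H}` as an additive subgroup
of `R`. -/
def qAmp {R : Type*} [CommRing R] (H : Subgroup (Matrix.SpecialLinearGroup (Fin 2) R))
    (g : Matrix.SpecialLinearGroup (Fin 2) R) : AddSubgroup R where
  carrier := {x : R | g * Tm R x * g⁻¹ ∈ H}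
  zero_mem' := by
    show g * Tm R 0 * g⁻¹ ∈ H
    rw [Tm_zero, mul_one, mul_inv_cancel]
    exact H.one_mem
  add_mem' := by
    intro a b ha hb
    show g * Tm R (a + b) * g⁻¹ ∈ H
    have h := H.mul_mem ha hb
    rw [← Tm_mul]
    convert h using 1
    group
  neg_mem' := by
    intro a ha
    show g * Tm R (-a) * g⁻¹ ∈ H
    have h := H.inv_mem ha
    rw [← Tm_inv]
    convert h using 1
    group

open Subgroup

namespace Subgroup

variable {G : Type*} [Group G]

lemma mem_map_conj_iff (H : Subgroup G) (a x : G) :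
    x ∈ H.map (MulAut.conj a).toMonoidHom ↔ a⁻¹ * x * a ∈ H := by
  rw [Subgroup.mem_map_equiv]
  simp

lemma stabilizer_mk_eq_subgroupOf_map_conj (K L : Subgroup G) (a : G) :
    MulAction.stabilizer L (a : G ⧸ K) = (K.map (MulAut.conj a).toMonoidHom).subgroupOf L := by
  ext b
  rw [MulAction.mem_stabilizer_iff, mem_subgroupOf, mem_map_conj_iff]
  change ((b * a : G) : G ⧸ K) = a ↔ _
  rw [QuotientGroup.eq, ← inv_mem_iff]
  group

lemma relIndex_map_conj_eq_ncard_orbit (K L : Subgroup G) (a : G) :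
    (K.map (MulAut.conj a).toMonoidHom).relIndex L = (MulAction.orbit L (a : G ⧸ K)).ncard := by
  rw [relIndex, ← stabilizer_mk_eq_subgroupOf_map_conj, MulAction.index_stabilizer]

lemma relIndex_eq_ncard_orbit (K L : Subgroup G) :
    K.relIndex L = (MulAction.orbit L ((1 : G) : G ⧸ K)).ncard := by
  have hK : K.map (MulAut.conj (1 : G)).toMonoidHom = K := by
    ext x
    simp
  rw [← relIndex_map_conj_eq_ncard_orbit, hK]

lemma mk_mem_orbit_iff_inv_mem_doubleCoset (H B : Subgroup G) (a x : G) :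
    (x : G ⧸ H) ∈ MulAction.orbit B (a : G ⧸ H) ↔
      x⁻¹ ∈ DoubleCoset.doubleCoset a⁻¹ (H : Set G) B := by
  rw [DoubleCoset.mem_doubleCoset]
  constructor
  · rintro ⟨b, hb⟩
    change ((b * a : G) : G ⧸ H) = x at hb
    rw [QuotientGroup.eq] at hb
    exact ⟨_, inv_mem hb, _, inv_mem b.2, by group⟩
  · rintro ⟨h, hh, y, hy, hx⟩
    refine ⟨⟨y⁻¹, inv_mem hy⟩, ?_⟩
    change ((y⁻¹ * a : G) : G ⧸ H) = x
    rw [QuotientGroup.eq, ← inv_inv x, hx]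
    convert inv_mem hh using 1
    group

theorem relIndex_sup_of_le_normalizer {N K : Subgroup G} (hK : K ≤ normalizer (N : Set G)) :
    K.relIndex (N ⊔ K) = K.relIndex N := by
  rw [relIndex_eq_ncard_orbit, relIndex_eq_ncard_orbit]
  congr 1
  ext x
  constructor
  · rintro ⟨⟨z, hz⟩, rfl⟩
    rw [← SetLike.mem_coe, coe_mul_of_right_le_normalizer_left N K hK] at hz
    obtain ⟨n, hn, k, hk, rfl⟩ := hz
    refine ⟨⟨n, hn⟩, ?_⟩
    change ((n * 1 : G) : G ⧸ K) = ((n * k * 1 : G) : G ⧸ K)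
    rw [QuotientGroup.eq]
    simpa [mul_assoc] using hk
  · rintro ⟨n, rfl⟩
    exact ⟨inclusion le_sup_left n, rfl⟩

theorem index_eq_sum_relIndex_of_doubleCoset {H B : Subgroup G} (hH : H.index ≠ 0)
    {t : ℕ} (g : Fin t → G)
    (hdisj : ∀ i j : Fin t, i ≠ j →
      Disjoint (DoubleCoset.doubleCoset (g i) (H : Set G) B)
        (DoubleCoset.doubleCoset (g j) (H : Set G) B))
    (hcover : ∀ x : G, ∃ i, x ∈ DoubleCoset.doubleCoset (g i) (H : Set G) B) :
    H.index = ∑ i, (H.map (MulAut.conj (g i)⁻¹).toMonoidHom).relIndex B := by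
  have : Finite (G ⧸ H) := index_ne_zero_iff_finite.mp hH
  set orbit : Fin t → Set (G ⧸ H) := fun i => MulAction.orbit B (((g i)⁻¹ : G) : G ⧸ H)
  have mem_orbit (i : Fin t) (x : G) :
      (x : G ⧸ H) ∈ orbit i ↔ x⁻¹ ∈ DoubleCoset.doubleCoset (g i) (H : Set G) B := by
    rw [mk_mem_orbit_iff_inv_mem_doubleCoset, inv_inv]
  have hunion : (⋃ i, orbit i) = Set.univ := by
    refine Set.eq_univ_of_forall fun x => ?_
    induction x using QuotientGroup.induction_on with | H x => ?_
    obtain ⟨i, hi⟩ := hcover x⁻¹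
    exact Set.mem_iUnion.mpr ⟨i, (mem_orbit i x).mpr hi⟩
  have hpairwise : Pairwise (Function.onFun Disjoint orbit) := by
    intro i j hij
    refine Set.disjoint_left.mpr fun x hi hj => ?_
    induction x using QuotientGroup.induction_on with | H x => ?_
    exact Set.disjoint_left.mp (hdisj i j hij) ((mem_orbit i x).mp hi) ((mem_orbit j x).mp hj)
  rw [index, ← Set.ncard_univ, ← hunion, Set.ncard_iUnion_of_finite (fun _ => Set.toFinite _)
    hpairwise, finsum_eq_sum_of_fintype]
  simp only [orbit, relIndex_map_conj_eq_ncard_orbit]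

end Subgroup

section SL2

variable {R : Type*} [CommRing R]

variable (R) in
def translationHom : Multiplicative R →* Matrix.SpecialLinearGroup (Fin 2) R where
  toFun r := Tm R r.toAdd
  map_one' := Tm_zero R
  map_mul' a b := (Tm_mul a.toAdd b.toAdd).symm

lemma range_translationHom : (translationHom R).range = Ugrp R := by
  ext x
  exact ⟨fun ⟨r, hr⟩ => ⟨r.toAdd, hr.symm⟩, fun ⟨r, hr⟩ => ⟨.ofAdd r, hr.symm⟩⟩

lemma Tm_mem_BorelSub (r : R) : Tm R r ∈ BorelSub R := by
  change !![1, r; 0, 1] 1 0 = 0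
  simp

lemma Ugrp_le_BorelSub : Ugrp R ≤ BorelSub R := by
  rintro _ ⟨r, rfl⟩
  exact Tm_mem_BorelSub r

lemma mul_Tm_mul_inv_of_mem_BorelSub {b : Matrix.SpecialLinearGroup (Fin 2) R}
    (hb : b ∈ BorelSub R) (r : R) : b * Tm R r * b⁻¹ = Tm R (b 0 0 ^ 2 * r) := by
  have hb : (b : Matrix (Fin 2) (Fin 2) R) 1 0 = 0 := hb
  have hdet : b 0 0 * b 1 1 = 1 := by
    have h := b.det_coe
    rw [Matrix.det_fin_two, hb] at h
    linear_combination h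
  rw [mul_inv_eq_iff_eq_mul]
  apply Subtype.ext
  rw [Matrix.SpecialLinearGroup.coe_mul, Matrix.SpecialLinearGroup.coe_mul]
  ext i j
  fin_cases i <;> fin_cases j <;> simp [Tm, Matrix.mul_apply, Fin.sum_univ_two, hb]
  linear_combination (-(b 0 0 * r)) * hdet

lemma BorelSub_le_normalizer_Ugrp : BorelSub R ≤ normalizer (Ugrp R : Set _) := by
  rw [le_normalizer_iff]
  rintro b hb _ ⟨r, rfl⟩
  exact ⟨_, mul_Tm_mul_inv_of_mem_BorelSub hb r⟩

lemma relIndex_Ugrp_eq_index_qAmp (H : Subgroup (Matrix.SpecialLinearGroup (Fin 2) R))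
    (g : Matrix.SpecialLinearGroup (Fin 2) R) :
    (H.map (MulAut.conj g⁻¹).toMonoidHom ⊓ BorelSub R).relIndex (Ugrp R) = (qAmp H g).index := by
  have hcomap : (H.map (MulAut.conj g⁻¹).toMonoidHom ⊓ BorelSub R).comap (translationHom R) =
      (qAmp H g).toSubgroup := by
    ext r
    rw [mem_comap, mem_inf, mem_map_conj_iff, inv_inv, Multiplicative.mem_toSubgroup]
    exact and_iff_left (Tm_mem_BorelSub _)
  rw [← range_translationHom, MonoidHom.range_eq_map, ← relIndex_comap, hcomap,
    relIndex_top_right, AddSubgroup.index_toSubgroup]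

end SL2

theorem statement9_general {D : Type*} [CommRing D]
    (H : Subgroup (Matrix.SpecialLinearGroup (Fin 2) D))
    (n : ℕ) (hn : H.index = n) (hn0 : n ≠ 0)
    (t : ℕ) (g : Fin t → Matrix.SpecialLinearGroup (Fin 2) D)
    (hdisj : ∀ i j : Fin t, i ≠ j →
      Disjoint (DoubleCoset.doubleCoset (g i) (H : Set (Matrix.SpecialLinearGroup (Fin 2) D)) (BorelSub D))
        (DoubleCoset.doubleCoset (g j) (H : Set (Matrix.SpecialLinearGroup (Fin 2) D)) (BorelSub D)))
    (hcover : ∀ x : Matrix.SpecialLinearGroup (Fin 2) D,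
      ∃ i : Fin t,
        x ∈ DoubleCoset.doubleCoset (g i) (H : Set (Matrix.SpecialLinearGroup (Fin 2) D)) (BorelSub D)) :
    n = ∑ i : Fin t,
      (Ugrp D ⊔ (H.map (MulAut.conj (g i)⁻¹).toMonoidHom ⊓ BorelSub D)).relIndex (BorelSub D) *
        (qAmp H (g i)).index := by
  subst hn
  rw [index_eq_sum_relIndex_of_doubleCoset hn0 g hdisj hcover]
  refine Finset.sum_congr rfl fun i _ => ?_
  set K := H.map (MulAut.conj (g i)⁻¹).toMonoidHom ⊓ BorelSub D
  have hKB : K ≤ BorelSub D := inf_le_right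
  rw [← inf_relIndex_right, ← relIndex_mul_relIndex K (Ugrp D ⊔ K) (BorelSub D) le_sup_right
      (sup_le Ugrp_le_BorelSub hKB),
    relIndex_sup_of_le_normalizer (hKB.trans BorelSub_le_normalizer_Ugrp),
    relIndex_Ugrp_eq_index_qAmp, mul_comm]

/-- Theorem 3.1, the cusp-split formula. Let `H ≤ SL₂(D)` have finite
index `n`, and let `g₁, …, g_t` be a complete set of representatives of the double cosets
`H\SL₂(D)/B`, where `B` is the BorelSub subgroup. Then
`n = ∑ᵢ m(H,gᵢ) · [D : b(H,gᵢ)]`, where `m(H,g)` is the index in `B` of the subgroup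
`U·(g⁻¹Hg ∩ B)` generated by `U` and `g⁻¹Hg ∩ B`, and `[D : b(H,gᵢ)]` is the index of the
quasi-amplitude as an additive subgroup of `D`. -/
theorem statement9 {D : Type*} [CommRing D] [IsDomain D] [IsDedekindDomain D]
    (H : Subgroup (Matrix.SpecialLinearGroup (Fin 2) D))
    (n : ℕ) (hn : H.index = n) (hn0 : n ≠ 0)
    (t : ℕ) (g : Fin t → Matrix.SpecialLinearGroup (Fin 2) D)
    (hdisj : ∀ i j : Fin t, i ≠ j →
      Disjoint (DoubleCoset.doubleCoset (g i) (H : Set (Matrix.SpecialLinearGroup (Fin 2) D)) (BorelSub D))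
        (DoubleCoset.doubleCoset (g j) (H : Set (Matrix.SpecialLinearGroup (Fin 2) D)) (BorelSub D)))
    (hcover : ∀ x : Matrix.SpecialLinearGroup (Fin 2) D,
      ∃ i : Fin t,
        x ∈ DoubleCoset.doubleCoset (g i) (H : Set (Matrix.SpecialLinearGroup (Fin 2) D)) (BorelSub D)) :
    n = ∑ i : Fin t,
      (Ugrp D ⊔ (H.map (MulAut.conj (g i)⁻¹).toMonoidHom ⊓ BorelSub D)).relIndex (BorelSub D) *
        (qAmp H (g i)).index :=
  statement9_general H n hn hn0 t g hdisj hcover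
end
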